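/- Let H be a cocommutative involutive Hopf ℂ-algebra and ρ an antisymmetric Fox pairing on H. Then the associated double bracket ⟨⟨a,b⟩⟩_ρ = b_[1] S(ρ(a_[2],b_[2])_[1]) a_[1] ⊗ ρ(a_[2],b_[2])_[2] is adapted to the antipode: (S⊗S)(⟨⟨a,b⟩⟩_ρ) = (⟨⟨S(a),S(b)⟩⟩_ρ)^∘ for all a,b ∈ H, where (c⊗d)^∘ = d⊗c. -/

import Mathlib

/-!
Encode `x ⊗ y` as `S x ⊗ y` in the algebra `H ⊗ H`. Since `S² = id`, the double bracket becomes
`(S a₁ ⊗ 1) · Δ(ρ(a₂, b₂)) · (S b₁ ⊗ 1)`, a product of three maps in the convolution algebra of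
linear maps from the cocommutative coalgebra `H ⊗ H` to the algebra `H ⊗ H`. Reading both sides
of the claim through the injective map `id ⊗ S`, the left side becomes this encoding and the flip
becomes the algebra map `comm`, so the claim says that the word is fixed by applying `comm` and
precomposing with the coalgebra map `S ⊗ S`. The Fox rules give
`ρ(S a, S b) = S(a₁) ρ(a₂, b₁) S(b₂)`; after applying the algebra map `Δ` (with `Δ S = (S ⊗ S) Δ`
by cocommutativity), the new outer factors cancel against the transformed ones through
`(1 ⊗ a₁)(S a₂ ⊗ S a₃) = S a ⊗ 1`.
-/

open TensorProduct

noncomputable section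

namespace Stmt12

variable {H : Type*} [Ring H] [HopfAlgebra ℂ H]

/-- The antipode of `H`. -/
def S : H →ₗ[ℂ] H := HopfAlgebra.antipode ℂ

/-- The comultiplication of `H`. -/
def Δ : H →ₗ[ℂ] H ⊗[ℂ] H := Coalgebra.comul

/-- The counit of `H`. -/
def ε : H →ₗ[ℂ] ℂ := Coalgebra.counit

/-- The multiplication of `H` as a linear map on the tensor square. -/
def mulH : H ⊗[ℂ] H →ₗ[ℂ] H := LinearMap.mul' ℂ H

/-- The flip `(c ⊗ d)^∘ = d ⊗ c` on `H ⊗[ℂ] H`. -/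
def flipT : H ⊗[ℂ] H →ₗ[ℂ] H ⊗[ℂ] H := (TensorProduct.comm ℂ H H).toLinearMap

/-- `H` is cocommutative. -/
def IsCocomm (H : Type*) [Ring H] [HopfAlgebra ℂ H] : Prop :=
  ∀ a : H, (TensorProduct.comm ℂ H H) (Coalgebra.comul (R := ℂ) a) = Coalgebra.comul (R := ℂ) a

/-- `H` is involutive: the antipode squares to the identity. -/
def IsInvolutive (H : Type*) [Ring H] [HopfAlgebra ℂ H] : Prop :=
  ∀ a : H, S (S a) = a

/-- `ρ` is a Fox pairing: a left Fox derivative in its first argument and a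
right Fox derivative in its second argument. -/
def IsFoxPairing (ρ : H →ₗ[ℂ] H →ₗ[ℂ] H) : Prop :=
  (∀ a b c : H, ρ (a * b) c = ε b • ρ a c + a * ρ b c) ∧
  (∀ a b c : H, ρ c (a * b) = ρ c a * b + ε a • ρ c b)

/-- `ρ` is antisymmetric: its transpose `ρ̄(a,b) = S(ρ(S b, S a))` equals `−ρ`. -/
def IsAntisymmetric (ρ : H →ₗ[ℂ] H →ₗ[ℂ] H) : Prop :=
  ∀ a b : H, S (ρ (S b) (S a)) = - ρ a b

/-- `(x ⊗ y) ⊗ z ↦ y * S(z) * x`. -/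
def firstFac : (H ⊗[ℂ] H) ⊗[ℂ] H →ₗ[ℂ] H :=
  (mulH ∘ₗ (TensorProduct.map mulH LinearMap.id) ∘ₗ
    ((TensorProduct.assoc ℂ H H H).trans (TensorProduct.comm ℂ H (H ⊗[ℂ] H))).toLinearMap)
  ∘ₗ TensorProduct.map (LinearMap.id : H ⊗[ℂ] H →ₗ[ℂ] H ⊗[ℂ] H) S

/-- `ρ` as a linear map on the tensor square. -/
def ρT (ρ : H →ₗ[ℂ] H →ₗ[ℂ] H) : H ⊗[ℂ] H →ₗ[ℂ] H := TensorProduct.lift ρ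

/-- The Massuyeau–Turaev double bracket associated with a Fox pairing, as a linear map:
`a ⊗ b ↦ b₍₁₎ S(ρ(a₍₂₎,b₍₂₎)₍₁₎) a₍₁₎ ⊗ ρ(a₍₂₎,b₍₂₎)₍₂₎`. -/
def dbrMap (ρ : H →ₗ[ℂ] H →ₗ[ℂ] H) : H ⊗[ℂ] H →ₗ[ℂ] H ⊗[ℂ] H :=
  (TensorProduct.map firstFac LinearMap.id)
  ∘ₗ (TensorProduct.assoc ℂ (H ⊗[ℂ] H) H H).symm.toLinearMap
  ∘ₗ (TensorProduct.map LinearMap.id (Δ ∘ₗ ρT ρ))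
  ∘ₗ (TensorProduct.tensorTensorTensorComm ℂ H H H H).toLinearMap
  ∘ₗ (TensorProduct.map Δ Δ)

open Coalgebra HopfAlgebra WithConv

section Convolution
variable {R A B C D : Type*} [CommSemiring R] [Semiring A] [Algebra R A] [Semiring B]
  [Algebra R B] [AddCommMonoid C] [Module R C] [Coalgebra R C] [AddCommMonoid D] [Module R D]
  [Coalgebra R D]

def postcompConv (h : A →ₐ[R] B) : WithConv (C →ₗ[R] A) →* WithConv (C →ₗ[R] B) where
  toFun f := toConv (h.toLinearMap ∘ₗ f.ofConv)
  map_one' := by ext; simp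
  map_mul' f g := congrArg toConv (LinearMap.algHom_comp_convMul_distrib h f g)

def precompConv (g : D →ₗc[R] C) : WithConv (C →ₗ[R] A) →* WithConv (D →ₗ[R] A) where
  toFun f := toConv (f.ofConv ∘ₗ g.toLinearMap)
  map_one' := by ext; simp
  map_mul' f f' := congrArg toConv (LinearMap.convMul_comp_coalgHom_distrib f f' g)

@[simp] theorem postcompConv_apply (h : A →ₐ[R] B) (f : WithConv (C →ₗ[R] A)) :
    postcompConv h f = toConv (h.toLinearMap ∘ₗ f.ofConv) := rfl

@[simp] theorem precompConv_apply (g : D →ₗc[R] C) (f : WithConv (C →ₗ[R] A)) :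
    precompConv g f = toConv (f.ofConv ∘ₗ g.toLinearMap) := rfl

theorem convMul_comm_of_commute [Coalgebra.IsCocomm R C] {f g : WithConv (C →ₗ[R] A)}
    (h : ∀ x y, Commute (f x) (g y)) : f * g = g * f := by
  ext c
  rw [LinearMap.convMul_apply, LinearMap.convMul_apply]
  conv_rhs => rw [← comm_comul R c]
  induction comul (R := R) c using TensorProduct.induction_on with
  | zero => simp
  | add s t hs ht => simp only [map_add, hs, ht]
  | tmul x y => exact (h x y).eq

theorem toConv_map_comp_comul (f : C →ₗ[R] A) (g : C →ₗ[R] B) :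
    toConv (TensorProduct.map f g ∘ₗ comul) =
      toConv (Algebra.TensorProduct.includeLeft.toLinearMap ∘ₗ f) *
        toConv (Algebra.TensorProduct.includeRight.toLinearMap ∘ₗ g) := by
  ext c
  simp only [LinearMap.convMul_apply, LinearMap.comp_apply]
  induction comul (R := R) c using TensorProduct.induction_on with
  | zero => simp
  | add s t hs ht => simp only [map_add, hs, ht]
  | tmul x y => simp

theorem includeRight_comp_mul_includeLeft_comp_comm [Coalgebra.IsCocomm R C]
    (g : C →ₗ[R] B) (f : C →ₗ[R] A) :
    toConv (Algebra.TensorProduct.includeRight.toLinearMap ∘ₗ g) *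
        toConv (Algebra.TensorProduct.includeLeft.toLinearMap ∘ₗ f) =
      toConv (Algebra.TensorProduct.includeLeft.toLinearMap ∘ₗ f) *
        toConv (Algebra.TensorProduct.includeRight.toLinearMap ∘ₗ g) :=
  convMul_comm_of_commute fun x y ↦ by
    simpa using (Commute.one_left (f y)).tmul (Commute.one_right (g x))

end Convolution

theorem sum_counit_right_smul {R C ι : Type*} [CommSemiring R] [AddCommMonoid C] [Module R C]
    [Coalgebra R C] {c : C} (𝓡 : Repr R c ι) :
    ∑ i ∈ 𝓡.index, counit (R := R) (𝓡.right i) • 𝓡.left i = c := by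
  simpa only [map_sum, TensorProduct.rid_tmul, one_smul] using
    congr(TensorProduct.rid R C $(sum_tmul_counit_eq 𝓡))

section Projections
variable {R A C D : Type*} [CommSemiring R] [Semiring A] [Algebra R A]
  [AddCommMonoid C] [Module R C] [Coalgebra R C] [AddCommMonoid D] [Module R D] [Coalgebra R D]

variable (R C D) in
def fstCoalgHom : C ⊗[R] D →ₗc[R] C :=
  (Coalgebra.TensorProduct.rid R R C).toCoalgHom.comp
    (Coalgebra.TensorProduct.map (CoalgHom.id R C) (counitCoalgHom R D))

variable (R C D) in
def sndCoalgHom : C ⊗[R] D →ₗc[R] D :=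
  (Coalgebra.TensorProduct.lid R D).toCoalgHom.comp
    (Coalgebra.TensorProduct.map (counitCoalgHom R C) (CoalgHom.id R D))

@[simp] theorem fstCoalgHom_tmul (c : C) (d : D) :
    fstCoalgHom R C D (c ⊗ₜ d) = counit (R := R) d • c := rfl

@[simp] theorem sndCoalgHom_tmul (c : C) (d : D) :
    sndCoalgHom R C D (c ⊗ₜ d) = counit (R := R) c • d := rfl

theorem precompConv_fstCoalgHom_mul_apply_tmul (f : WithConv (C →ₗ[R] A))
    (g : WithConv (C ⊗[R] D →ₗ[R] A)) (c : C) (d : D) :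
    (precompConv (fstCoalgHom R C D) f * g) (c ⊗ₜ d) =
      (f * toConv (g.ofConv ∘ₗ (TensorProduct.mk R C D).flip d)) c := by
  rw [LinearMap.convMul_apply, LinearMap.convMul_apply, TensorProduct.comul_tmul,
    ← (ℛ R c).eq, ← (ℛ R d).eq]
  conv_rhs => rw [← sum_counit_smul (ℛ R d)]
  simp [TensorProduct.sum_tmul, TensorProduct.tmul_sum]
  exact Finset.sum_comm

theorem mul_precompConv_sndCoalgHom_apply_tmul (g : WithConv (C ⊗[R] D →ₗ[R] A))
    (f : WithConv (D →ₗ[R] A)) (c : C) (d : D) :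
    (g * precompConv (sndCoalgHom R C D) f) (c ⊗ₜ d) =
      (toConv (g.ofConv ∘ₗ TensorProduct.mk R C D c) * f) d := by
  rw [LinearMap.convMul_apply, LinearMap.convMul_apply, TensorProduct.comul_tmul,
    ← (ℛ R c).eq, ← (ℛ R d).eq]
  conv_rhs => rw [← sum_counit_right_smul (ℛ R c)]
  simp [TensorProduct.sum_tmul, TensorProduct.tmul_sum]

end Projections

section Antipode
variable {R A : Type*} [CommSemiring R] [Semiring A] [HopfAlgebra R A] [Coalgebra.IsCocomm R A]

local notation "ι₁" => AlgHom.toLinearMap (Algebra.TensorProduct.includeLeft : A →ₐ[R] A ⊗[R] A)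
local notation "ι₂" => AlgHom.toLinearMap (Algebra.TensorProduct.includeRight : A →ₐ[R] A ⊗[R] A)

theorem comul_comp_antipode :
    comul ∘ₗ antipode R = TensorProduct.map (antipode R) (antipode R) ∘ₗ comul (A := A) := by
  have hleftInv : toConv (TensorProduct.map (antipode R) (antipode R) ∘ₗ comul (A := A)) *
      toConv comul = 1 :=
    calc _ = toConv (ι₁ ∘ₗ antipode R) * (toConv (ι₂ ∘ₗ antipode R) *
          toConv (ι₁ ∘ₗ LinearMap.id)) * toConv (ι₂ ∘ₗ LinearMap.id) := by
          rw [toConv_map_comp_comul, ← LinearMap.id_comp comul, ← TensorProduct.map_id,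
            toConv_map_comp_comul]
          simp only [mul_assoc]
      _ = postcompConv Algebra.TensorProduct.includeLeft (toConv (antipode R) * toConv .id) *
          postcompConv Algebra.TensorProduct.includeRight (toConv (antipode R) * toConv .id) := by
          rw [includeRight_comp_mul_includeLeft_comp_comm, map_mul, map_mul]
          simp only [mul_assoc]; rfl
      _ = 1 := by rw [LinearMap.antipode_mul_id, map_one, map_one, one_mul]
  exact congrArg ofConv (left_inv_eq_right_inv hleftInv LinearMap.comul_right_inv).symm

theorem includeRight_mul_comul_comp_antipode :
    toConv ι₂ * toConv (comul ∘ₗ antipode R) = toConv (ι₁ ∘ₗ antipode R) :=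
  calc _ = toConv (ι₂ ∘ₗ .id) * (toConv (ι₁ ∘ₗ antipode R) * toConv (ι₂ ∘ₗ antipode R)) := by
        rw [comul_comp_antipode, toConv_map_comp_comul]; rfl
    _ = toConv (ι₁ ∘ₗ antipode R) *
          postcompConv Algebra.TensorProduct.includeRight (toConv .id * toConv (antipode R)) := by
        rw [← mul_assoc, includeRight_comp_mul_includeLeft_comp_comm, mul_assoc, map_mul]; rfl
    _ = _ := by rw [LinearMap.id_mul_antipode, map_one, mul_one]

theorem comul_comp_antipode_mul_includeRight :
    toConv (comul ∘ₗ antipode R) * toConv ι₂ = toConv (ι₁ ∘ₗ antipode R) :=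
  calc _ = toConv (ι₁ ∘ₗ antipode R) * (toConv (ι₂ ∘ₗ antipode R) * toConv (ι₂ ∘ₗ .id)) := by
        rw [comul_comp_antipode, toConv_map_comp_comul, mul_assoc]; rfl
    _ = toConv (ι₁ ∘ₗ antipode R) *
          postcompConv Algebra.TensorProduct.includeRight (toConv (antipode R) * toConv .id) := by
        rw [map_mul]; rfl
    _ = _ := by rw [LinearMap.antipode_mul_id, map_one, mul_one]

variable (R A) in
def antipodeCoalgHom : A →ₗc[R] A where
  toLinearMap := antipode R
  counit_comp := counit_comp_antipode
  map_comp_comul := comul_comp_antipode.symm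

end Antipode

section Fox
variable {R A : Type*} [CommSemiring R] [Ring A]

section Bialgebra
variable [Bialgebra R A] {d : A →ₗ[R] A}

theorem map_one_of_leftFox (hd : ∀ x y, d (x * y) = counit (R := R) y • d x + x * d y) :
    d 1 = 0 := by
  simpa [Bialgebra.counit_one] using hd 1 1

theorem map_one_of_rightFox (hd : ∀ x y, d (x * y) = d x * y + counit (R := R) x • d y) :
    d 1 = 0 := by
  simpa [Bialgebra.counit_one] using hd 1 1

end Bialgebra

variable [HopfAlgebra R A] {d : A →ₗ[R] A}

theorem toConv_comp_antipode_of_leftFox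
    (hd : ∀ x y, d (x * y) = counit (R := R) y • d x + x * d y) :
    toConv (d ∘ₗ antipode R) = -(toConv (antipode R) * toConv d) := by
  ext a
  have h0 := congrArg d (sum_antipode_mul_eq_smul (ℛ R a))
  simp only [map_sum, hd, map_smul, map_one_of_leftFox hd, smul_zero,
    Finset.sum_add_distrib] at h0
  rw [ofConv_neg, LinearMap.neg_apply, (ℛ R a).convMul_apply, ofConv_toConv, LinearMap.comp_apply]
  conv_lhs => rw [← sum_counit_right_smul (ℛ R a)]
  simp only [map_sum, map_smul]
  exact eq_neg_of_add_eq_zero_left h0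

theorem toConv_comp_antipode_of_rightFox
    (hd : ∀ x y, d (x * y) = d x * y + counit (R := R) x • d y) :
    toConv (d ∘ₗ antipode R) = -(toConv d * toConv (antipode R)) := by
  ext a
  have h0 := congrArg d (sum_mul_antipode_eq_smul (ℛ R a))
  simp only [map_sum, hd, map_smul, map_one_of_rightFox hd, smul_zero,
    Finset.sum_add_distrib] at h0
  rw [ofConv_neg, LinearMap.neg_apply, (ℛ R a).convMul_apply, ofConv_toConv, LinearMap.comp_apply]
  conv_lhs => rw [← sum_counit_smul (ℛ R a)]
  simp only [map_sum, map_smul]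
  exact eq_neg_of_add_eq_zero_right h0

end Fox

section DoubleBracket

local notation "π₁" => fstCoalgHom ℂ H H
local notation "π₂" => sndCoalgHom ℂ H H
local notation "ι₁" => AlgHom.toLinearMap (Algebra.TensorProduct.includeLeft : H →ₐ[ℂ] H ⊗[ℂ] H)
local notation "ι₂" => AlgHom.toLinearMap (Algebra.TensorProduct.includeRight : H →ₐ[ℂ] H ⊗[ℂ] H)
local notation "σ" => Coalgebra.TensorProduct.map (antipodeCoalgHom ℂ H) (antipodeCoalgHom ℂ H)
local notation "τ" => AlgEquiv.toAlgHom (Algebra.TensorProduct.comm ℂ H H)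

theorem toConv_ρT_comp_map_antipode_antipode {ρ : H →ₗ[ℂ] H →ₗ[ℂ] H} (hρ : IsFoxPairing ρ) :
    toConv (ρT ρ ∘ₗ TensorProduct.map S S) =
      precompConv π₁ (toConv S) * toConv (ρT ρ) * precompConv π₂ (toConv S) := by
  have hright : toConv (ρT ρ ∘ₗ TensorProduct.map LinearMap.id S) =
      -(toConv (ρT ρ) * precompConv π₂ (toConv S)) := by
    refine WithConv.ext (TensorProduct.ext' fun a b ↦ ?_)
    rw [ofConv_neg, LinearMap.neg_apply, mul_precompConv_sndCoalgHom_apply_tmul]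
    exact congr(ofConv $(toConv_comp_antipode_of_rightFox (d := ρ a) (hρ.2 · · a)) b)
  have hleft : toConv (ρT ρ ∘ₗ TensorProduct.map S S) =
      -(precompConv π₁ (toConv S) * toConv (ρT ρ ∘ₗ TensorProduct.map LinearMap.id S)) := by
    refine WithConv.ext (TensorProduct.ext' fun a b ↦ ?_)
    rw [ofConv_neg, LinearMap.neg_apply, precompConv_fstCoalgHom_mul_apply_tmul]
    exact congr(ofConv $(toConv_comp_antipode_of_leftFox (d := ρ.flip (S b))
      (fun x y ↦ hρ.1 x y (S b))) a)
  rw [hleft, hright, mul_neg, neg_neg, mul_assoc]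

theorem map_antipode_id_firstFac (hinv : IsInvolutive H) (x y : H) (t : H ⊗[ℂ] H) :
    TensorProduct.map S LinearMap.id (TensorProduct.map firstFac LinearMap.id
        ((TensorProduct.assoc ℂ (H ⊗[ℂ] H) H H).symm ((x ⊗ₜ y) ⊗ₜ t))) =
      (S x ⊗ₜ 1) * t * (S y ⊗ₜ 1) := by
  induction t using TensorProduct.induction_on with
  | zero => simp
  | add s t hs ht => simp only [TensorProduct.tmul_add, map_add, hs, ht, mul_add, add_mul]
  | tmul p q =>
    have hp : antipode ℂ (antipode ℂ p) = p := hinv p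
    simp [firstFac, mulH, S, antipode_mul_antidistrib, mul_assoc, hp]

theorem toConv_map_antipode_id_comp_dbrMap [Coalgebra.IsCocomm ℂ H] (hinv : IsInvolutive H)
    (ρ : H →ₗ[ℂ] H →ₗ[ℂ] H) :
    toConv (TensorProduct.map S LinearMap.id ∘ₗ dbrMap ρ) =
      precompConv π₁ (toConv (ι₁ ∘ₗ S)) * toConv (Δ ∘ₗ ρT ρ) *
        precompConv π₂ (toConv (ι₁ ∘ₗ S)) := by
  refine WithConv.ext (TensorProduct.ext' fun a b ↦ ?_)
  have ha : Δ a = ∑ i ∈ (ℛ ℂ a).index, (ℛ ℂ a).left i ⊗ₜ (ℛ ℂ a).right i := (ℛ ℂ a).eq.symm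
  -- the bracket puts `b₂` into `ρ`, the word puts `b₁` there
  have hb : Δ b = ∑ j ∈ (ℛ ℂ b).index, (ℛ ℂ b).right j ⊗ₜ (ℛ ℂ b).left j := by
    rw [Δ, ← comm_comul ℂ b, ← (ℛ ℂ b).eq, map_sum]; rfl
  rw [mul_assoc, precompConv_fstCoalgHom_mul_apply_tmul, (ℛ ℂ a).convMul_apply]
  simp only [LinearMap.comp_apply, LinearMap.flip_apply, TensorProduct.mk_apply,
    mul_precompConv_sndCoalgHom_apply_tmul, (ℛ ℂ b).convMul_apply, Finset.mul_sum, ← mul_assoc]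
  simp only [dbrMap, LinearMap.comp_apply, TensorProduct.map_tmul, ha, hb, TensorProduct.sum_tmul,
    TensorProduct.tmul_sum, map_sum, LinearEquiv.coe_coe, TensorProduct.tensorTensorTensorComm_tmul,
    LinearMap.id_apply, map_antipode_id_firstFac hinv]
  exact Finset.sum_comm

theorem toConv_map_antipode_id_comp_dbrMap_eq_comm [Coalgebra.IsCocomm ℂ H]
    (hinv : IsInvolutive H) {ρ : H →ₗ[ℂ] H →ₗ[ℂ] H} (hρ : IsFoxPairing ρ) :
    toConv (TensorProduct.map S LinearMap.id ∘ₗ dbrMap ρ) =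
      precompConv σ (postcompConv τ (toConv (TensorProduct.map S LinearMap.id ∘ₗ dbrMap ρ))) := by
  have hS : ∀ x : H, antipode ℂ (antipode ℂ x) = x := hinv
  have h₁ : precompConv σ (postcompConv τ (precompConv π₁ (toConv (ι₁ ∘ₗ S)))) =
      precompConv π₁ (toConv ι₂) := by
    refine WithConv.ext (TensorProduct.ext' fun a b ↦ ?_)
    simp [antipodeCoalgHom, S, hS]
  have h₂ : precompConv σ (postcompConv τ (precompConv π₂ (toConv (ι₁ ∘ₗ S)))) =
      precompConv π₂ (toConv ι₂) := by
    refine WithConv.ext (TensorProduct.ext' fun a b ↦ ?_)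
    simp [antipodeCoalgHom, S, hS]
  have hΔ : precompConv σ (postcompConv τ (toConv (Δ ∘ₗ ρT ρ))) =
        postcompConv (Bialgebra.comulAlgHom ℂ H) (toConv (ρT ρ ∘ₗ TensorProduct.map S S)) := by
    refine WithConv.ext (TensorProduct.ext' fun a b ↦ ?_)
    simp [antipodeCoalgHom, S, Δ]
  symm
  calc _ = precompConv π₁ (toConv ι₂) *
        postcompConv (Bialgebra.comulAlgHom ℂ H) (toConv (ρT ρ ∘ₗ TensorProduct.map S S)) *
          precompConv π₂ (toConv ι₂) := by
        rw [toConv_map_antipode_id_comp_dbrMap hinv, map_mul, map_mul, map_mul, map_mul, h₁, hΔ, h₂]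
    _ = precompConv π₁ (toConv ι₂ * toConv (comul ∘ₗ antipode ℂ)) * toConv (Δ ∘ₗ ρT ρ) *
          precompConv π₂ (toConv (comul ∘ₗ antipode ℂ) * toConv ι₂) := by
        rw [toConv_ρT_comp_map_antipode_antipode hρ, map_mul, map_mul, map_mul, map_mul]
        simp only [mul_assoc]; rfl
    _ = _ := by
        rw [includeRight_mul_comul_comp_antipode, comul_comp_antipode_mul_includeRight,
          toConv_map_antipode_id_comp_dbrMap hinv]
        rfl

end DoubleBracket

theorem map_id_antipode_map_antipode_antipode (hinv : IsInvolutive H) (z : H ⊗[ℂ] H) :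
    TensorProduct.map LinearMap.id S (TensorProduct.map S S z) =
      TensorProduct.map S LinearMap.id z := by
  induction z using TensorProduct.induction_on with
  | zero => simp
  | add s t hs ht => simp only [map_add, hs, ht]
  | tmul x y => simp [hinv y]

theorem map_id_antipode_flipT (z : H ⊗[ℂ] H) :
    TensorProduct.map LinearMap.id S (flipT z) =
      Algebra.TensorProduct.comm ℂ H H (TensorProduct.map S LinearMap.id z) := by
  induction z using TensorProduct.induction_on with
  | zero => simp
  | add s t hs ht => simp only [map_add, hs, ht]
  | tmul x y => simp [flipT]

theorem map_id_antipode_injective (hinv : IsInvolutive H) :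
    Function.Injective (TensorProduct.map (LinearMap.id : H →ₗ[ℂ] H) (S : H →ₗ[ℂ] H)) := by
  refine Function.Involutive.injective fun z ↦ ?_
  induction z using TensorProduct.induction_on with
  | zero => simp
  | add s t hs ht => simp only [map_add, hs, ht]
  | tmul x y => simp [hinv y]

theorem dbr_antipode_adapted_general
    (hco : IsCocomm H) (hinv : IsInvolutive H)
    (ρ : H →ₗ[ℂ] H →ₗ[ℂ] H) (hρ : IsFoxPairing ρ)
    (a b : H) :
    TensorProduct.map S S (dbrMap ρ (a ⊗ₜ[ℂ] b)) = flipT (dbrMap ρ (S a ⊗ₜ[ℂ] S b)) := by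
  have : Coalgebra.IsCocomm ℂ H := ⟨LinearMap.ext hco⟩
  have key := congr(ofConv $(toConv_map_antipode_id_comp_dbrMap_eq_comm hinv hρ) (a ⊗ₜ b))
  apply map_id_antipode_injective hinv
  rw [map_id_antipode_map_antipode_antipode hinv, map_id_antipode_flipT]
  exact key

/-- The double bracket associated with an antisymmetric Fox pairing
on a cocommutative involutive Hopf algebra is adapted to the antipode:
`(S ⊗ S)(⟨⟨a,b⟩⟩_ρ) = (⟨⟨S a, S b⟩⟩_ρ)^∘`. -/
theorem dbr_antipode_adapted
    (hco : IsCocomm H) (hinv : IsInvolutive H)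
    (ρ : H →ₗ[ℂ] H →ₗ[ℂ] H) (hρ : IsFoxPairing ρ) (hanti : IsAntisymmetric ρ)
    (a b : H) :
    TensorProduct.map S S (dbrMap ρ (a ⊗ₜ[ℂ] b)) = flipT (dbrMap ρ (S a ⊗ₜ[ℂ] S b)) :=
  dbr_antipode_adapted_general hco hinv ρ hρ a b

end Stmt12
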